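/- (SLLN for the compensator) Under the assumptions Σ_{i=0}^∞ β_i < 1, √n Σ_{i=n}^∞ β_i → 0 as n → ∞, (1/√n) Σ_{i=1}^n i β_i → 0 as n → ∞, and Σ_{i=1}^∞ i β_i < ∞, one has Λ_n / n → β_0 / (1 − Σ_{i=1}^∞ β_i) as n → ∞ almost surely. -/

import Mathlib

/-!
Let `H_n = ∑_{i ≤ n} ξ_i` and `B = ∑_{k ≥ 1} β_k`. The Doob decomposition `H = M + Λ` has a
martingale part `M` with increments bounded by `2`; orthogonality of increments gives
`E[M_n²] ≤ 4n`, so `∑_k E[(M_{k²}/k²)²] < ∞` and `M_{k²}/k² → 0` almost surely, and bounded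
increments interpolate between consecutive squares. Hence `(H_n - Λ_n)/n → 0`.

By the form of the intensity, `Λ_n = nβ₀ + ∑_{i ≤ n} (∑_{k=1}^{n-i} β_k) ξ_i`, which differs from
`nβ₀ + B H_n` by at most `∑_{m < n} ∑_{k > m} β_k = o(n)`. Therefore
`Λ_n/n = β₀ + B Λ_n/n + o(1)`, that is `Λ_n/n → β₀/(1 - B)`.
-/

open MeasureTheory Filter Finset Topology

lemma abs_sub_le_of_abs_succ_sub_le {f : ℕ → ℝ} {C : ℝ} (hf : ∀ n, |f (n + 1) - f n| ≤ C)
    {m n : ℕ} (hmn : m ≤ n) : |f n - f m| ≤ (n - m : ℕ) * C := by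
  have h := dist_le_Ico_sum_of_dist_le (f := f) (d := fun _ => C) hmn
    fun {k} _ _ => by rw [dist_comm, Real.dist_eq]; exact hf k
  simpa [Real.dist_eq, abs_sub_comm] using h

lemma Nat.tendsto_sqrt_atTop : Tendsto Nat.sqrt atTop atTop :=
  tendsto_atTop_atTop.2 fun b => ⟨b ^ 2, fun _ hn => Nat.le_sqrt'.2 hn⟩

lemma tendsto_div_atTop_of_tendsto_sq_div {f : ℕ → ℝ} {C : ℝ} (hf : ∀ n, |f (n + 1) - f n| ≤ C)
    (hsq : Tendsto (fun k : ℕ => f (k ^ 2) / (k : ℝ) ^ 2) atTop (𝓝 0)) :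
    Tendsto (fun n : ℕ => f n / n) atTop (𝓝 0) := by
  have hC : 0 ≤ C := (abs_nonneg _).trans (hf 0)
  have hbound : Tendsto (fun k : ℕ => |f (k ^ 2)| / (k : ℝ) ^ 2 + 2 * C / k) atTop (𝓝 0) := by
    have h := hsq.abs.add (tendsto_const_div_atTop_nhds_zero_nat (2 * C))
    simpa [abs_div] using h
  refine squeeze_zero_norm' ?_ (hbound.comp Nat.tendsto_sqrt_atTop)
  filter_upwards [eventually_ge_atTop 1] with n hn
  set k := Nat.sqrt n
  have hk : (0 : ℝ) < k := by exact_mod_cast Nat.sqrt_pos.2 hn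
  have hkn : k ^ 2 ≤ n := Nat.sqrt_le' n
  have hnk : n - k ^ 2 ≤ 2 * k := by
    have h : n < (k + 1) ^ 2 := Nat.lt_succ_sqrt' n
    rw [Nat.sub_le_iff_le_add]
    nlinarith
  have hknR : (k : ℝ) ^ 2 ≤ n := by exact_mod_cast hkn
  have hnkR : ((n - k ^ 2 : ℕ) : ℝ) ≤ 2 * k := by exact_mod_cast hnk
  have hfn : |f n| ≤ |f (k ^ 2)| + 2 * C * k := by
    have hstep := abs_sub_le_of_abs_succ_sub_le hf hkn
    have := abs_sub_abs_le_abs_sub (f n) (f (k ^ 2))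
    nlinarith
  show ‖f n / n‖ ≤ |f (k ^ 2)| / (k : ℝ) ^ 2 + 2 * C / k
  rw [norm_div, Real.norm_eq_abs, Real.norm_natCast]
  calc |f n| / n ≤ (|f (k ^ 2)| + 2 * C * k) / n := by gcongr
    _ = |f (k ^ 2)| / n + 2 * C * k / n := add_div _ _ _
    _ ≤ |f (k ^ 2)| / (k : ℝ) ^ 2 + 2 * C * k / (k : ℝ) ^ 2 := by gcongr
    _ = |f (k ^ 2)| / (k : ℝ) ^ 2 + 2 * C / k := by field_simp

lemma sum_Icc_one_eq_sum_range {M : Type*} [AddCommMonoid M] (f : ℕ → M) (n : ℕ) :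
    ∑ i ∈ Icc 1 n, f i = ∑ i ∈ range n, f (i + 1) := by
  rw [← Finset.Ico_add_one_right_eq_Icc, sum_Ico_eq_sum_range]
  simp [add_comm]

lemma sum_Icc_sum_Icc_sub_one_eq {R : Type*} [CommSemiring R] (β x : ℕ → R) (n : ℕ) :
    ∑ m ∈ Icc 1 n, ∑ i ∈ Icc 1 (m - 1), β (m - i) * x i =
      ∑ i ∈ Icc 1 n, (∑ k ∈ range (n - i), β (k + 1)) * x i := by
  induction n with
  | zero => simp
  | succ n ih =>
    have hsplit : ∀ i ∈ Icc 1 n, (∑ k ∈ range (n + 1 - i), β (k + 1)) * x i =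
        (∑ k ∈ range (n - i), β (k + 1)) * x i + β (n + 1 - i) * x i := by
      intro i hi
      rw [mem_Icc] at hi
      rw [show n + 1 - i = n - i + 1 by omega, sum_range_succ]
      ring
    rw [sum_Icc_succ_top (by omega), sum_Icc_succ_top (by omega), ih, Nat.add_sub_cancel,
      Nat.sub_self, sum_congr rfl hsplit, sum_add_distrib]
    simp

lemma sum_Icc_one_sub_eq_sum_range {M : Type*} [AddCommMonoid M] (u : ℕ → M) (n : ℕ) :
    ∑ i ∈ Icc 1 n, u (n - i) = ∑ m ∈ range n, u m := by
  rw [sum_Icc_one_eq_sum_range, ← sum_range_reflect]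
  exact sum_congr rfl fun i hi => congrArg u (by rw [mem_range] at hi; omega)

lemma tendsto_sum_convolution_sub_div (β : ℕ → ℝ) (hβ : ∀ i, 0 ≤ β i) (hs : Summable β)
    {x : ℕ → ℝ} (hx : ∀ i, |x i| ≤ 1) :
    Tendsto (fun n : ℕ => (∑ m ∈ Icc 1 n, ∑ i ∈ Icc 1 (m - 1), β (m - i) * x i -
      (∑' i, β (i + 1)) * ∑ i ∈ Icc 1 n, x i) / n) atTop (𝓝 0) := by
  set B := ∑' i, β (i + 1)
  have hs' : Summable fun i => β (i + 1) := (summable_nat_add_iff 1).2 hs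
  set u : ℕ → ℝ := fun m => B - ∑ k ∈ range m, β (k + 1)
  have hu0 : ∀ m, 0 ≤ u m := fun m => sub_nonneg.2 (hs'.sum_le_tsum _ fun i _ => hβ _)
  have hu : Tendsto u atTop (𝓝 0) := by
    have h := (tendsto_const_nhds (x := B)).sub hs'.hasSum.tendsto_sum_nat
    rwa [sub_self] at h
  refine squeeze_zero_norm' (Eventually.of_forall fun n => ?_) hu.cesaro
  have hdiff : ∑ m ∈ Icc 1 n, ∑ i ∈ Icc 1 (m - 1), β (m - i) * x i - B * ∑ i ∈ Icc 1 n, x i =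
      -∑ i ∈ Icc 1 n, u (n - i) * x i := by
    rw [sum_Icc_sum_Icc_sub_one_eq, mul_sum, ← sum_sub_distrib, ← sum_neg_distrib]
    refine sum_congr rfl fun i _ => ?_
    ring
  have habs : |∑ i ∈ Icc 1 n, u (n - i) * x i| ≤ ∑ m ∈ range n, u m := by
    rw [← sum_Icc_one_sub_eq_sum_range]
    refine (abs_sum_le_sum_abs _ _).trans (sum_le_sum fun i _ => ?_)
    rw [abs_mul, abs_of_nonneg (hu0 _)]
    exact mul_le_of_le_one_right (hu0 _) (hx i)
  rw [hdiff, norm_div, Real.norm_natCast, norm_neg, Real.norm_eq_abs, div_eq_inv_mul]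
  gcongr

lemma tendsto_intensity_average (β : ℕ → ℝ) (hβ : ∀ i, 0 ≤ β i) (hs : Summable β)
    (hB : ∑' i, β (i + 1) ≠ 1) {x : ℕ → ℝ} (hx : ∀ i, |x i| ≤ 1) {L : ℕ → ℝ}
    (hL : ∀ n, L n = ∑ m ∈ Icc 1 n, (β 0 + ∑ i ∈ Icc 1 (m - 1), β (m - i) * x i))
    (htrack : Tendsto (fun n : ℕ => (∑ i ∈ Icc 1 n, x i - L n) / n) atTop (𝓝 0)) :
    Tendsto (fun n : ℕ => L n / n) atTop (𝓝 (β 0 / (1 - ∑' i, β (i + 1)))) := by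
  set B := ∑' i, β (i + 1)
  have hB' : 1 - B ≠ 0 := sub_ne_zero.2 hB.symm
  have hlim : Tendsto (fun n : ℕ => β 0 + (∑ m ∈ Icc 1 n, ∑ i ∈ Icc 1 (m - 1), β (m - i) * x i -
      B * ∑ i ∈ Icc 1 n, x i) / n + B * ((∑ i ∈ Icc 1 n, x i - L n) / n)) atTop (𝓝 (β 0)) := by
    simpa using (tendsto_sum_convolution_sub_div β hβ hs hx).const_add (β 0) |>.add
      (htrack.const_mul B)
  have hscaled : Tendsto (fun n : ℕ => (1 - B) * (L n / n)) atTop (𝓝 (β 0)) := by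
    refine hlim.congr' ((eventually_ne_atTop 0).mono fun n hn => ?_)
    have hLn : L n = n * β 0 + ∑ m ∈ Icc 1 n, ∑ i ∈ Icc 1 (m - 1), β (m - i) * x i := by
      rw [hL, sum_add_distrib, sum_const, Nat.card_Icc, Nat.add_sub_cancel, nsmul_eq_mul]
    dsimp only
    rw [hLn]
    field_simp
    ring
  simpa [div_eq_inv_mul, hB'] using hscaled.const_mul (1 - B)⁻¹

namespace MeasureTheory

variable {Ω : Type*} {m0 : MeasurableSpace Ω} {μ : Measure Ω}

lemma ae_tendsto_zero_of_summable_integral {Y : ℕ → Ω → ℝ} (hY : ∀ k, Integrable (Y k) μ)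
    (hY0 : ∀ k, 0 ≤ᵐ[μ] Y k) (hs : Summable fun k => ∫ ω, Y k ω ∂μ) :
    ∀ᵐ ω ∂μ, Tendsto (fun k => Y k ω) atTop (𝓝 0) := by
  have hnorm : ∀ k, eLpNorm (Y k) 1 μ = ENNReal.ofReal (∫ ω, Y k ω ∂μ) := fun k => by
    rw [eLpNorm_one_eq_lintegral_enorm, ofReal_integral_eq_lintegral_ofReal (hY k) (hY0 k)]
    exact lintegral_congr_ae ((hY0 k).mono fun ω hω => Real.enorm_of_nonneg hω)
  have hsum : ∑' k, eLpNorm (Y k) 1 μ ≠ ⊤ := by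
    simp_rw [hnorm]
    rw [← ENNReal.ofReal_tsum_of_nonneg (fun k => integral_nonneg_of_ae (hY0 k)) hs]
    exact ENNReal.ofReal_ne_top
  filter_upwards [summable_norm_of_tsum_eLpNorm_ne_top le_rfl
    (fun k => (hY k).aestronglyMeasurable) hsum] with ω hω
  exact tendsto_zero_iff_norm_tendsto_zero.2 hω.tendsto_atTop_zero

lemma integrable_sq_of_ae_abs_le [IsFiniteMeasure μ] {f : Ω → ℝ} (hf : AEStronglyMeasurable f μ)
    {c : ℝ} (hc : ∀ᵐ ω ∂μ, |f ω| ≤ c) : Integrable (fun ω => f ω ^ 2) μ :=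
  Integrable.of_bound (hf.pow 2) (c ^ 2) (hc.mono fun ω hω => by
    rw [Real.norm_eq_abs, abs_pow]; exact pow_le_pow_left₀ (abs_nonneg _) hω 2)

variable {ℱ : Filtration ℕ m0} {M : ℕ → Ω → ℝ} {C : ℝ}

lemma Martingale.integral_mul_sub_eq_zero [IsFiniteMeasure μ] (hM : Martingale M ℱ μ) (n : ℕ)
    (hint : Integrable (fun ω => M n ω * (M (n + 1) ω - M n ω)) μ) :
    ∫ ω, M n ω * (M (n + 1) ω - M n ω) ∂μ = 0 := by
  have hcond : μ[M (n + 1) - M n|ℱ n] =ᵐ[μ] 0 := by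
    filter_upwards [condExp_sub (hM.integrable (n + 1)) (hM.integrable n) (ℱ n),
      hM.condExp_ae_eq n.le_succ, hM.condExp_ae_eq (le_refl n)] with ω h h1 h0
    simp [h, h1, h0]
  calc ∫ ω, M n ω * (M (n + 1) ω - M n ω) ∂μ
      = ∫ ω, (μ[M n * (M (n + 1) - M n)|ℱ n]) ω ∂μ := (integral_condExp (ℱ.le n)).symm
    _ = ∫ ω, (0 : Ω → ℝ) ω ∂μ := integral_congr_ae <|
        (condExp_mul_of_stronglyMeasurable_left (g := M (n + 1) - M n) (hM.stronglyAdapted n) hint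
          ((hM.integrable _).sub (hM.integrable _))).trans
        (hcond.mono fun ω hω => by rw [Pi.mul_apply, hω, Pi.zero_apply, mul_zero])
    _ = 0 := integral_zero _ _

lemma ae_abs_le_of_ae_abs_succ_sub_le (hM0 : M 0 = 0)
    (hinc : ∀ᵐ ω ∂μ, ∀ n, |M (n + 1) ω - M n ω| ≤ C) (n : ℕ) :
    ∀ᵐ ω ∂μ, |M n ω| ≤ n * C := by
  filter_upwards [hinc] with ω hω
  simpa [hM0] using abs_sub_le_of_abs_succ_sub_le (f := fun n => M n ω) hω n.zero_le

lemma Martingale.integral_sq_le [IsProbabilityMeasure μ] (hM : Martingale M ℱ μ) (hM0 : M 0 = 0)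
    (hinc : ∀ᵐ ω ∂μ, ∀ n, |M (n + 1) ω - M n ω| ≤ C) (n : ℕ) :
    ∫ ω, M n ω ^ 2 ∂μ ≤ n * C ^ 2 := by
  have hmeas := fun n => (hM.integrable n).aestronglyMeasurable
  have hbdd := ae_abs_le_of_ae_abs_succ_sub_le hM0 hinc
  induction n with
  | zero => simp [hM0]
  | succ n ih =>
    set d : Ω → ℝ := fun ω => M (n + 1) ω - M n ω
    have hd : ∀ᵐ ω ∂μ, |d ω| ≤ C := hinc.mono fun ω hω => hω n
    have hd_int : Integrable d μ := (hM.integrable _).sub (hM.integrable _)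
    have hMd_int : Integrable (fun ω => M n ω * d ω) μ := hd_int.bdd_mul (hmeas n) (hbdd n)
    have hd_sq : ∫ ω, d ω ^ 2 ∂μ ≤ C ^ 2 := by
      refine (integral_mono_ae (integrable_sq_of_ae_abs_le hd_int.1 hd) (integrable_const (C ^ 2))
        (hd.mono fun ω hω => ?_)).trans_eq (by simp)
      simpa only [sq_abs] using pow_le_pow_left₀ (abs_nonneg (d ω)) hω 2
    have hexpand : (fun ω => M (n + 1) ω ^ 2) =
        fun ω => M n ω ^ 2 + 2 * (M n ω * d ω) + d ω ^ 2 := by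
      funext ω; simp only [d]; ring
    have hM_sq := integrable_sq_of_ae_abs_le (hmeas n) (hbdd n)
    have hsum : Integrable (fun ω => M n ω ^ 2 + 2 * (M n ω * d ω)) μ :=
      hM_sq.add (hMd_int.const_mul 2)
    rw [hexpand, integral_add hsum (integrable_sq_of_ae_abs_le hd_int.1 hd),
      integral_add hM_sq (hMd_int.const_mul 2),
      integral_const_mul, hM.integral_mul_sub_eq_zero n hMd_int]
    push_cast
    linarith

theorem Martingale.ae_tendsto_div_atTop_zero [IsProbabilityMeasure μ] (hM : Martingale M ℱ μ)
    (hM0 : M 0 = 0) (hinc : ∀ᵐ ω ∂μ, ∀ n, |M (n + 1) ω - M n ω| ≤ C) :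
    ∀ᵐ ω ∂μ, Tendsto (fun n : ℕ => M n ω / n) atTop (𝓝 0) := by
  set Y : ℕ → Ω → ℝ := fun k ω => (M (k ^ 2) ω / (k : ℝ) ^ 2) ^ 2
  have hY_int : ∀ k, Integrable (Y k) μ := fun k =>
    integrable_sq_of_ae_abs_le ((hM.integrable _).div_const _).aestronglyMeasurable
      ((ae_abs_le_of_ae_abs_succ_sub_le hM0 hinc (k ^ 2)).mono fun ω hω => by
        rw [abs_div]; exact div_le_div_of_nonneg_right hω (abs_nonneg _))
  have hY_le : ∀ k, ∫ ω, Y k ω ∂μ ≤ C ^ 2 * (1 / (k : ℝ) ^ 2) := fun k => by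
    simp_rw [Y, div_pow]
    rw [integral_div]
    rcases Nat.eq_zero_or_pos k with rfl | hk
    · simp
    · rw [div_le_iff₀ (by positivity)]
      calc ∫ ω, M (k ^ 2) ω ^ 2 ∂μ ≤ ((k ^ 2 : ℕ) : ℝ) * C ^ 2 := hM.integral_sq_le hM0 hinc _
        _ = C ^ 2 * (1 / (k : ℝ) ^ 2) * ((k : ℝ) ^ 2) ^ 2 := by field_simp; push_cast; ring
  have hY_sum : Summable fun k => ∫ ω, Y k ω ∂μ :=
    ((Real.summable_one_div_nat_pow.2 one_lt_two).mul_left (C ^ 2)).of_nonneg_of_le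
      (fun k => integral_nonneg fun ω => sq_nonneg _) hY_le
  filter_upwards [ae_tendsto_zero_of_summable_integral hY_int
    (fun k => ae_of_all _ fun ω => sq_nonneg _) hY_sum, hinc] with ω hYω hω
  refine tendsto_div_atTop_of_tendsto_sq_div hω ?_
  refine tendsto_zero_iff_norm_tendsto_zero.2 ?_
  simpa [Y, Real.sqrt_sq_eq_abs, abs_div] using hYω.sqrt

lemma predictablePart_sum_Icc {E : Type*} [NormedAddCommGroup E] [NormedSpace ℝ E]
    (ξ : ℕ → Ω → E) (ℱ : Filtration ℕ m0) (μ : Measure Ω) (n : ℕ) :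
    predictablePart (fun n => ∑ i ∈ Icc 1 n, ξ i) ℱ μ n = ∑ i ∈ Icc 1 n, μ[ξ i|ℱ (i - 1)] := by
  simp only [predictablePart, sum_Icc_succ_top (Nat.le_add_left 1 _), add_sub_cancel_left]
  rw [sum_Icc_one_eq_sum_range]
  simp

theorem ae_tendsto_sum_sub_sum_condExp_div [IsProbabilityMeasure μ] {ξ : ℕ → Ω → ℝ}
    (hξ : ∀ i, 1 ≤ i → StronglyMeasurable[ℱ i] (ξ i)) (hξC : ∀ i ω, |ξ i ω| ≤ C) :
    ∀ᵐ ω ∂μ, Tendsto (fun n : ℕ =>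
      (∑ i ∈ Icc 1 n, ξ i ω - ∑ i ∈ Icc 1 n, μ[ξ i|ℱ (i - 1)] ω) / n) atTop (𝓝 0) := by
  set H : ℕ → Ω → ℝ := fun n => ∑ i ∈ Icc 1 n, ξ i
  have hH_adapted : StronglyAdapted ℱ H := fun n => Finset.stronglyMeasurable_sum _ fun i hi =>
    (hξ i (mem_Icc.1 hi).1).mono (ℱ.mono (mem_Icc.1 hi).2)
  have hH_int : ∀ n, Integrable (H n) μ := fun n => integrable_finsetSum' _ fun i hi =>
    .of_bound ((hξ i (mem_Icc.1 hi).1).mono (ℱ.le i)).aestronglyMeasurable C (ae_of_all _ (hξC i))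
  have hH_inc : ∀ᵐ ω ∂μ, ∀ n, ‖H (n + 1) ω - H n ω‖ ≤ C := ae_of_all _ fun ω n => by
    simpa [H, sum_Icc_succ_top] using hξC (n + 1) ω
  filter_upwards [(martingale_martingalePart hH_adapted hH_int).ae_tendsto_div_atTop_zero
    (by simp [H]) ((martingalePart_bdd_difference ℱ hH_inc).mono fun ω hω n => by simpa using hω n)]
    with ω hω
  simpa [martingalePart, predictablePart_sum_Icc, H] using hω

end MeasureTheory

def naturalFiltrationFromOne {Ω β : Type*} [MeasurableSpace Ω] [mβ : MeasurableSpace β]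
    (ξ : ℕ → Ω → β) (hξ : ∀ n, Measurable (ξ n)) : Filtration ℕ ‹MeasurableSpace Ω› where
  seq n := ⨆ i ∈ Icc 1 n, MeasurableSpace.comap (ξ i) mβ
  mono' _ _ hmn := iSup₂_mono' fun i hi => ⟨i, Icc_subset_Icc le_rfl hmn hi, le_rfl⟩
  le' _ := iSup₂_le fun i _ => (hξ i).comap_le

lemma measurable_naturalFiltrationFromOne {Ω β : Type*} [MeasurableSpace Ω] [mβ : MeasurableSpace β]
    {ξ : ℕ → Ω → β} (hξ : ∀ n, Measurable (ξ n)) {i n : ℕ} (hi : i ∈ Icc 1 n) :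
    Measurable[naturalFiltrationFromOne ξ hξ n] (ξ i) :=
  Measurable.of_comap_le <|
    le_iSup₂ (f := fun i (_ : i ∈ Icc 1 n) => MeasurableSpace.comap (ξ i) mβ) i hi

lemma naturalFiltrationFromOne_zero {Ω β : Type*} [MeasurableSpace Ω] [MeasurableSpace β]
    {ξ : ℕ → Ω → β} (hξ : ∀ n, Measurable (ξ n)) : naturalFiltrationFromOne ξ hξ 0 = ⊥ := by
  simp only [naturalFiltrationFromOne]
  simp

lemma integral_eq_measureReal_of_zero_or_one {Ω : Type*} {m0 : MeasurableSpace Ω} {μ : Measure Ω}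
    {f : Ω → ℝ} (hf : Measurable f) (h01 : ∀ ω, f ω = 0 ∨ f ω = 1) :
    ∫ ω, f ω ∂μ = μ.real {ω | f ω = 1} := by
  rw [← integral_indicator_one (s := {ω | f ω = 1}) (hf (measurableSet_singleton 1))]
  congr 1
  funext ω
  rcases h01 ω with h | h <;> simp [h, Set.indicator]

theorem stmt10_general
    {Ω : Type*} [MeasurableSpace Ω] (P : Measure Ω) [IsProbabilityMeasure P]
    (β : ℕ → ℝ) (hβpos : ∀ i, 0 < β i)
    (hβsummable : Summable β)
    (hβsum : ∑' i, β i < 1)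
    (ξ : ℕ → Ω → ℝ) (hξmeas : ∀ n, Measurable (ξ n))
    (hξ01 : ∀ n ω, ξ n ω = 0 ∨ ξ n ω = 1)
    (F : ℕ → MeasurableSpace Ω)
    (hF : ∀ n, F n = ⨆ i ∈ Finset.Icc 1 n, MeasurableSpace.comap (ξ i) inferInstance)
    (hξ1 : P {ω | ξ 1 ω = 1} = ENNReal.ofReal (β 0))
    (hcond : ∀ n, 2 ≤ n →
      P[ξ n|F (n - 1)] =ᵐ[P] fun ω => β 0 + ∑ i ∈ Finset.Icc 1 (n - 1), β (n - i) * ξ i ω)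
    (Λ : ℕ → Ω → ℝ) (hΛ : ∀ n ω, Λ n ω = ∑ i ∈ Finset.Icc 1 n, (P[ξ i|F (i - 1)]) ω) :
    ∀ᵐ ω ∂P, Tendsto (fun n => Λ n ω / (n : ℝ)) atTop
      (nhds (β 0 / (1 - ∑' i, β (i + 1)))) := by
  have hβ0 : ∀ i, 0 ≤ β i := fun i => (hβpos i).le
  have hB : ∑' i, β (i + 1) ≠ 1 := by
    linarith [hβsummable.tsum_eq_zero_add, hβpos 0]
  have hξ_abs : ∀ n ω, |ξ n ω| ≤ 1 := fun n ω => by rcases hξ01 n ω with h | h <;> simp [h]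
  obtain rfl : F = naturalFiltrationFromOne ξ hξmeas := funext hF
  have hadapted : ∀ i, 1 ≤ i → StronglyMeasurable[naturalFiltrationFromOne ξ hξmeas i] (ξ i) :=
    fun i hi =>
      (measurable_naturalFiltrationFromOne hξmeas (mem_Icc.2 ⟨hi, le_rfl⟩)).stronglyMeasurable
  have hintensity : ∀ᵐ ω ∂P, ∀ n, 1 ≤ n →
      P[ξ n|naturalFiltrationFromOne ξ hξmeas (n - 1)] ω =
        β 0 + ∑ i ∈ Icc 1 (n - 1), β (n - i) * ξ i ω := by
    refine ae_all_iff.2 fun n => ?_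
    rcases Nat.lt_or_ge n 2 with hn | hn
    · refine ae_of_all _ fun ω hn1 => ?_
      obtain rfl : n = 1 := by omega
      have hmean : ∫ ω, ξ 1 ω ∂P = β 0 := by
        rw [integral_eq_measureReal_of_zero_or_one (hξmeas 1) (hξ01 1), measureReal_def, hξ1,
          ENNReal.toReal_ofReal (hβ0 0)]
      simp [naturalFiltrationFromOne_zero, condExp_bot, hmean]
    · filter_upwards [hcond n hn] with ω hω _ using hω
  filter_upwards [ae_tendsto_sum_sub_sum_condExp_div (μ := P) hadapted hξ_abs, hintensity]
    with ω hMω hω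
  refine tendsto_intensity_average β hβ0 hβsummable hB (fun i => hξ_abs i ω)
    (fun n => by rw [hΛ]; exact sum_congr rfl fun m hm => hω m (mem_Icc.1 hm).1) ?_
  simpa only [hΛ] using hMω

theorem stmt10
    {Ω : Type*} [MeasurableSpace Ω] (P : Measure Ω) [IsProbabilityMeasure P]
    (β : ℕ → ℝ) (hβpos : ∀ i, 0 < β i)
    (hβsummable : Summable β)
    (hβsum : ∑' i, β i < 1)
    (htail : Tendsto (fun n : ℕ => Real.sqrt n * ∑' i, β (n + i)) atTop (nhds 0))
    (hscaled : Tendsto (fun n : ℕ => (∑ i ∈ Finset.Icc 1 n, (i : ℝ) * β i) / Real.sqrt n)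
      atTop (nhds 0))
    (hmoment : Summable fun i : ℕ => (i : ℝ) * β i)
    (ξ : ℕ → Ω → ℝ) (hξmeas : ∀ n, Measurable (ξ n))
    (hξ01 : ∀ n ω, ξ n ω = 0 ∨ ξ n ω = 1)
    (F : ℕ → MeasurableSpace Ω)
    (hF : ∀ n, F n = ⨆ i ∈ Finset.Icc 1 n, MeasurableSpace.comap (ξ i) inferInstance)
    (hξ1 : P {ω | ξ 1 ω = 1} = ENNReal.ofReal (β 0))
    (hcond : ∀ n, 2 ≤ n →
      P[ξ n|F (n - 1)] =ᵐ[P] fun ω => β 0 + ∑ i ∈ Finset.Icc 1 (n - 1), β (n - i) * ξ i ω)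
    (Λ : ℕ → Ω → ℝ) (hΛ : ∀ n ω, Λ n ω = ∑ i ∈ Finset.Icc 1 n, (P[ξ i|F (i - 1)]) ω) :
    ∀ᵐ ω ∂P, Tendsto (fun n => Λ n ω / (n : ℝ)) atTop
      (nhds (β 0 / (1 - ∑' i, β (i + 1)))) :=
  stmt10_general P β hβpos hβsummable hβsum ξ hξmeas hξ01 F hF hξ1 hcond Λ hΛ
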